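/- arXiv:2305.18020 — 4 statements merged into one kernel-verified Lean document; each statement's English description precedes it below -/
import Mathlib

section
/- Let N ≥ 2 and define V(s₁,…,s_{N−1}) = Σ_{k=1}^{N} (F(s_k) − F(s_{k−1}))·u(φ(s_{k−1}, s_k)), where s₀ = 0, s_N = 1 and the k-th summand is read as 0 whenever s_{k−1} = s_k. If (s₁,…,s_{N−1}) maximizes V over all vectors with 0 ≤ s₁ ≤ … ≤ s_{N−1} ≤ 1, then the maximizer satisfies 0 < s₁ < … < s_{N−1} < 1 and, setting x_k = φ(s_{k−1}, s_k) for k = 1,…,N, it satisfies s_k = μ(x_k, x_{k+1}) for every k = 1,…,N−1 (the dual expectations property). -/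
open MeasureTheory Set

/-- The mean of the "density" `g` conditional on the interval `(a, b)`. -/
noncomputable def condMean (g : ℝ → ℝ) (a b : ℝ) : ℝ :=
  (∫ t in a..b, t * g t) / (∫ t in a..b, g t)

/-- The designer's expected payoff under the interval-partitional information
structure with cutoffs `s 1, …, s (N-1)` (where `s 0 = 0` and `s N = 1`):
each interval `(s (k-1), s k)` induces the posterior mean `condMean f (s (k-1)) (s k)`. -/
noncomputable def payoffV (f u : ℝ → ℝ) (N : ℕ) (s : ℕ → ℝ) : ℝ :=
  ∑ k ∈ Finset.Icc 1 N,
    ((∫ t in (0:ℝ)..(s k), f t) - (∫ t in (0:ℝ)..(s (k - 1)), f t)) *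
      u (condMean f (s (k - 1)) (s k))

/-!
Write `payoffV` as a sum of cell values `(F b - F a) * u (φ a b)`, where `φ = condMean f` and
`μ = condMean u''`. Since `φ a b` is a proper convex combination of `φ a c` and `φ c b`, strict
convexity of `u` makes splitting a cell a strict improvement. Hence a maximizer has no degenerate
cell: otherwise some cutoff is shared by a degenerate and a proper cell, and moving it into the
proper cell splits that cell. Each interior cutoff `s k` then locally maximizes the sum of the two
adjacent cell values, and the first-order condition says that the tangent lines of `u` at `x k`
and `x (k + 1)` meet above `s k`; integrating `t * u'' t` by parts, this is
`s k = μ (x k) (x (k + 1))`.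
-/

open intervalIntegral (intervalIntegral_pos_of_pos_on integral_symm integral_interval_sub_left
  integral_add_adjacent_intervals integral_hasDerivAt_right integral_deriv_eq_sub
  integral_mul_deriv_eq_deriv_mul)

section condMean

variable {f : ℝ → ℝ} {a b : ℝ}

lemma condMean_comm (g : ℝ → ℝ) (a b : ℝ) : condMean g b a = condMean g a b := by
  rw [condMean, condMean, integral_symm a b, integral_symm a b, neg_div_neg_eq]

lemma condMean_mul_integral (h : ∫ t in a..b, f t ≠ 0) :
    condMean f a b * ∫ t in a..b, f t = ∫ t in a..b, t * f t :=
  div_mul_cancel₀ _ h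

lemma condMean_mem_Ioo (hf : Continuous f) (hpos : ∀ t ∈ Ioo a b, 0 < f t) (hab : a < b) :
    condMean f a b ∈ Ioo a b := by
  have hA : 0 < ∫ t in a..b, f t :=
    intervalIntegral_pos_of_pos_on (hf.intervalIntegrable a b) hpos hab
  have hmoment : ∀ c : ℝ, ∫ t in a..b, (t - c) * f t =
      (∫ t in a..b, t * f t) - c * ∫ t in a..b, f t := fun c => by
    simp only [sub_mul]
    rw [intervalIntegral.integral_sub (Continuous.intervalIntegrable (by fun_prop) a b)
      (Continuous.intervalIntegrable (by fun_prop) a b), intervalIntegral.integral_const_mul]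
  constructor
  · rw [condMean, lt_div_iff₀ hA, ← sub_pos, ← hmoment]
    exact intervalIntegral_pos_of_pos_on (Continuous.intervalIntegrable (by fun_prop) a b)
      (fun t ht => mul_pos (sub_pos.2 ht.1) (hpos t ht)) hab
  · rw [condMean, div_lt_iff₀ hA, ← sub_pos, ← neg_sub, ← hmoment,
      ← intervalIntegral.integral_neg]
    refine intervalIntegral_pos_of_pos_on (Continuous.intervalIntegrable (by fun_prop) a b)
      (fun t ht => ?_) hab
    rw [← neg_mul, neg_sub]
    exact mul_pos (sub_pos.2 ht.2) (hpos t ht)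

end condMean

noncomputable def cellValue (f u : ℝ → ℝ) (a b : ℝ) : ℝ :=
  ((∫ t in (0:ℝ)..b, f t) - ∫ t in (0:ℝ)..a, f t) * u (condMean f a b)

lemma payoffV_eq_sum_cellValue (f u : ℝ → ℝ) (N : ℕ) (s : ℕ → ℝ) :
    payoffV f u N s = ∑ k ∈ Finset.Icc 1 N, cellValue f u (s (k - 1)) (s k) := rfl

section cellValue

variable {f u : ℝ → ℝ} {a b c : ℝ}

@[simp]
lemma cellValue_self : cellValue f u a a = 0 := by simp [cellValue]

lemma cellValue_eq (hf : Continuous f) :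
    cellValue f u a b = (∫ t in a..b, f t) * u (condMean f a b) := by
  rw [cellValue, integral_interval_sub_left (hf.intervalIntegrable 0 b)
    (hf.intervalIntegrable 0 a)]

lemma cellValue_swap (hf : Continuous f) : cellValue f u b a = -cellValue f u a b := by
  rw [cellValue_eq hf, cellValue_eq hf, integral_symm, condMean_comm, neg_mul]

lemma cellValue_lt_add (hf : Continuous f) (hpos : ∀ t ∈ Ioo a b, 0 < f t)
    (hu : StrictConvexOn ℝ (Icc a b) u) (hac : a < c) (hcb : c < b) :
    cellValue f u a b < cellValue f u a c + cellValue f u c b := by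
  set A₁ := ∫ t in a..c, f t
  set A₂ := ∫ t in c..b, f t
  have hA₁ : 0 < A₁ := intervalIntegral_pos_of_pos_on
    (hf.intervalIntegrable a c) (fun t ht => hpos t ⟨ht.1, ht.2.trans hcb⟩) hac
  have hA₂ : 0 < A₂ := intervalIntegral_pos_of_pos_on
    (hf.intervalIntegrable c b) (fun t ht => hpos t ⟨hac.trans ht.1, ht.2⟩) hcb
  have hx₁ := condMean_mem_Ioo hf (fun t ht => hpos t ⟨ht.1, ht.2.trans hcb⟩) hac
  have hx₂ := condMean_mem_Ioo hf (fun t ht => hpos t ⟨hac.trans ht.1, ht.2⟩) hcb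
  have hA : ∫ t in a..b, f t = A₁ + A₂ :=
    (integral_add_adjacent_intervals (hf.intervalIntegrable a c)
      (hf.intervalIntegrable c b)).symm
  have hM : ∫ t in a..b, t * f t = (∫ t in a..c, t * f t) + ∫ t in c..b, t * f t :=
    (integral_add_adjacent_intervals
      (Continuous.intervalIntegrable (by fun_prop) a c)
      (Continuous.intervalIntegrable (by fun_prop) c b)).symm
  have hmean : condMean f a b =
      (A₁ / (A₁ + A₂)) • condMean f a c + (A₂ / (A₁ + A₂)) • condMean f c b := by
    have hM₁ : ∫ t in a..c, t * f t = condMean f a c * A₁ :=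
      (condMean_mul_integral hA₁.ne').symm
    have hM₂ : ∫ t in c..b, t * f t = condMean f c b * A₂ :=
      (condMean_mul_integral hA₂.ne').symm
    rw [condMean, hA, hM, hM₁, hM₂, smul_eq_mul, smul_eq_mul]
    field_simp
  have hA₁₂ : 0 < A₁ + A₂ := add_pos hA₁ hA₂
  have hconv := hu.2 ⟨hx₁.1.le, hx₁.2.le.trans hcb.le⟩
    ⟨hac.le.trans hx₂.1.le, hx₂.2.le⟩ (hx₁.2.trans hx₂.1).ne (div_pos hA₁ hA₁₂)
    (div_pos hA₂ hA₁₂) (by field_simp)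
  rw [← hmean, smul_eq_mul, smul_eq_mul] at hconv
  rw [cellValue_eq hf, cellValue_eq hf, cellValue_eq hf, hA]
  calc (A₁ + A₂) * u (condMean f a b)
      < (A₁ + A₂) *
          (A₁ / (A₁ + A₂) * u (condMean f a c) + A₂ / (A₁ + A₂) * u (condMean f c b)) :=
        mul_lt_mul_of_pos_left hconv hA₁₂
    _ = A₁ * u (condMean f a c) + A₂ * u (condMean f c b) := by field_simp

lemma hasDerivAt_cellValue_right (hf : Continuous f) (hA : ∫ t in a..b, f t ≠ 0)
    (hu : DifferentiableAt ℝ u (condMean f a b)) :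
    HasDerivAt (cellValue f u a)
      (f b * (u (condMean f a b) + deriv u (condMean f a b) * (b - condMean f a b))) b := by
  have hF := integral_hasDerivAt_right (hf.intervalIntegrable a b)
    (hf.stronglyMeasurableAtFilter volume _) hf.continuousAt
  have hf' : Continuous fun t => t * f t := by fun_prop
  have hM := integral_hasDerivAt_right (hf'.intervalIntegrable a b)
    (hf'.stronglyMeasurableAtFilter volume _) hf'.continuousAt
  rw [show cellValue f u a = fun x => (∫ t in a..x, f t) * u (condMean f a x) from
    funext fun x => cellValue_eq hf]
  refine (hF.mul (hu.hasDerivAt.comp b (hM.div hF hA))).congr_deriv ?_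
  simp only [Function.comp_apply, condMean]
  field_simp

lemma hasDerivAt_cellValue_left (hf : Continuous f) (hA : ∫ t in a..b, f t ≠ 0)
    (hu : DifferentiableAt ℝ u (condMean f a b)) :
    HasDerivAt (fun x => cellValue f u x b)
      (-(f a * (u (condMean f a b) + deriv u (condMean f a b) * (a - condMean f a b)))) a := by
  have hA' : ∫ t in b..a, f t ≠ 0 := by rwa [integral_symm, neg_ne_zero]
  rw [← condMean_comm] at hu ⊢
  rw [show (fun x => cellValue f u x b) = fun x => -cellValue f u b x from
    funext fun x => cellValue_swap hf]
  exact (hasDerivAt_cellValue_right hf hA' hu).neg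

end cellValue

lemma condMean_deriv_deriv_eq_of_tangent_eq {u : ℝ → ℝ} (hu : ContDiff ℝ 2 u)
    {x₁ x₂ c : ℝ} (hne : ∫ t in x₁..x₂, deriv (deriv u) t ≠ 0)
    (htangent : u x₁ + deriv u x₁ * (c - x₁) = u x₂ + deriv u x₂ * (c - x₂)) :
    condMean (deriv (deriv u)) x₁ x₂ = c := by
  have hu' : ContDiff ℝ 1 (deriv u) := hu.deriv'
  have hu'' : Continuous (deriv (deriv u)) := hu'.continuous_deriv_one
  have hden : ∫ t in x₁..x₂, deriv (deriv u) t = deriv u x₂ - deriv u x₁ :=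
    integral_deriv_eq_sub (fun x _ => hu.differentiable_deriv_two x)
      (hu''.intervalIntegrable _ _)
  have hnum : ∫ t in x₁..x₂, t * deriv (deriv u) t =
      x₂ * deriv u x₂ - x₁ * deriv u x₁ - (u x₂ - u x₁) := by
    rw [integral_mul_deriv_eq_deriv_mul (fun x _ => hasDerivAt_id' x)
      (fun x _ => (hu.differentiable_deriv_two x).hasDerivAt)
      (continuous_const.intervalIntegrable _ _) (hu''.intervalIntegrable _ _)]
    simp only [one_mul]
    rw [integral_deriv_eq_sub (fun x _ => hu.differentiable two_ne_zero x)
      (hu'.continuous.intervalIntegrable _ _)]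
  rw [condMean, div_eq_iff hne, hnum, hden]
  linear_combination htangent

lemma exists_le_lt_and_not_succ {p : ℕ → Prop} {i j : ℕ} (hij : i ≤ j) (hi : p i)
    (hj : ¬p j) : ∃ k, i ≤ k ∧ k < j ∧ p k ∧ ¬p (k + 1) := by
  induction j, hij using Nat.le_induction with
  | base => exact absurd hi hj
  | succ j hij ih =>
    by_cases hpj : p j
    · exact ⟨j, hij, j.lt_succ_self, hpj, hj⟩
    · obtain ⟨k, hik, hkj, hpk⟩ := ih hpj
      exact ⟨k, hik, hkj.trans j.lt_succ_self, hpk⟩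

def IsCutoffs (N : ℕ) (s : ℕ → ℝ) : Prop :=
  s 0 = 0 ∧ s N = 1 ∧ ∀ k < N, s k ≤ s (k + 1)

namespace IsCutoffs

variable {N : ℕ} {s : ℕ → ℝ}

lemma mono (hs : IsCutoffs N s) {i j : ℕ} (hij : i ≤ j) (hj : j ≤ N) : s i ≤ s j := by
  induction j, hij using Nat.le_induction with
  | base => exact le_rfl
  | succ j hij ih => exact (ih (by omega)).trans (hs.2.2 j (by omega))

lemma mem_Icc (hs : IsCutoffs N s) {i : ℕ} (hi : i ≤ N) : s i ∈ Icc 0 1 :=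
  ⟨hs.1 ▸ hs.mono i.zero_le hi, hs.2.1 ▸ hs.mono hi le_rfl⟩

lemma update (hs : IsCutoffs N s) {m : ℕ} (hm : m + 1 < N) {c : ℝ}
    (hc : c ∈ Icc (s m) (s (m + 2))) : IsCutoffs N (Function.update s (m + 1) c) := by
  refine ⟨by simpa using hs.1, by simpa [show N ≠ m + 1 by omega] using hs.2.1,
    fun k hk => ?_⟩
  rcases lt_trichotomy k m with hkm | rfl | hkm
  · rw [Function.update_of_ne (by omega), Function.update_of_ne (by omega)]
    exact hs.2.2 k hk
  · simpa using hc.1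
  · rcases (Nat.succ_le_of_lt hkm).eq_or_lt with rfl | hkm
    · simpa using hc.2
    · rw [Function.update_of_ne (by omega), Function.update_of_ne (by omega)]
      exact hs.2.2 k hk

lemma exists_degenerate_adjacent (hs : IsCutoffs N s) {k : ℕ} (hk : k < N)
    (hdeg : s k = s (k + 1)) :
    ∃ m, m + 1 < N ∧ s m < s (m + 2) ∧ (s (m + 1) = s m ∨ s (m + 1) = s (m + 2)) := by
  obtain ⟨j, -, hjN, hj0, hj1⟩ := exists_le_lt_and_not_succ (p := fun i => s i = 0)
    N.zero_le hs.1 (by simp [hs.2.1])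
  have hproper : s j < s (j + 1) := lt_of_le_of_ne (hs.2.2 j hjN) (hj0 ▸ Ne.symm hj1)
  rcases le_total k j with hkj | hjk
  · obtain ⟨m, -, hmj, hm0, hm1⟩ :=
      exists_le_lt_and_not_succ (p := fun i => s i = s (i + 1)) hkj hdeg hproper.ne
    refine ⟨m, by omega, ?_, Or.inl hm0.symm⟩
    exact hm0.trans_lt (lt_of_le_of_ne (hs.2.2 (m + 1) (by omega)) hm1)
  · obtain ⟨m, -, hmk, hm0, hm1⟩ :=
      exists_le_lt_and_not_succ (p := fun i => s i ≠ s (i + 1)) hjk hproper.ne (not_not.2 hdeg)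
    rw [not_not] at hm1
    refine ⟨m, by omega, ?_, Or.inr hm1⟩
    exact (lt_of_le_of_ne (hs.2.2 m (by omega)) hm0).trans_eq hm1

end IsCutoffs

lemma payoffV_update_sub (f u : ℝ → ℝ) {N m : ℕ} (s : ℕ → ℝ) (hm : m + 1 < N)
    (c : ℝ) :
    payoffV f u N (Function.update s (m + 1) c) - payoffV f u N s =
      (cellValue f u (s m) c + cellValue f u c (s (m + 2))) -
        (cellValue f u (s m) (s (m + 1)) + cellValue f u (s (m + 1)) (s (m + 2))) := by
  have hsupp : {m + 1, m + 2} ⊆ Finset.Icc 1 N := by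
    intro k hk
    simp only [Finset.mem_insert, Finset.mem_singleton] at hk
    rw [Finset.mem_Icc]
    omega
  have hzero : ∀ k ∈ Finset.Icc 1 N, k ∉ ({m + 1, m + 2} : Finset ℕ) →
      cellValue f u (Function.update s (m + 1) c (k - 1)) (Function.update s (m + 1) c k) -
        cellValue f u (s (k - 1)) (s k) = 0 := by
    intro k hk hkm
    simp only [Finset.mem_insert, Finset.mem_singleton, Finset.mem_Icc] at hk hkm
    rw [Function.update_of_ne (by omega), Function.update_of_ne (by omega), sub_self]
  rw [payoffV_eq_sum_cellValue, payoffV_eq_sum_cellValue, ← Finset.sum_sub_distrib,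
    ← Finset.sum_subset hsupp hzero, Finset.sum_pair (by omega)]
  simp only [Nat.add_sub_cancel, show m + 2 - 1 = m + 1 from rfl, Function.update_self,
    Function.update_of_ne (show m ≠ m + 1 by omega),
    Function.update_of_ne (show m + 2 ≠ m + 1 by omega)]
  ring

lemma cellValue_add_le_of_forall_payoffV_le {f u : ℝ → ℝ} {N m : ℕ} {s : ℕ → ℝ}
    (hs : IsCutoffs N s) (hmax : ∀ t, IsCutoffs N t → payoffV f u N t ≤ payoffV f u N s)
    (hm : m + 1 < N) {c : ℝ} (hc : c ∈ Icc (s m) (s (m + 2))) :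
    cellValue f u (s m) c + cellValue f u c (s (m + 2)) ≤
      cellValue f u (s m) (s (m + 1)) + cellValue f u (s (m + 1)) (s (m + 2)) := by
  have := payoffV_update_sub f u s hm c
  linarith [hmax _ (hs.update hm hc)]

section optimalCutoffs

variable {f u : ℝ → ℝ} {N : ℕ} {s : ℕ → ℝ}

lemma lt_succ_of_forall_payoffV_le (hf : Continuous f) (hf_pos : ∀ t ∈ Icc (0:ℝ) 1, 0 < f t)
    (hu : StrictConvexOn ℝ (Icc 0 1) u) (hs : IsCutoffs N s)
    (hmax : ∀ t, IsCutoffs N t → payoffV f u N t ≤ payoffV f u N s) :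
    ∀ k < N, s k < s (k + 1) := by
  intro k hk
  by_contra hdeg
  obtain ⟨m, hm, hlt, hpivot⟩ :=
    hs.exists_degenerate_adjacent hk (le_antisymm (hs.2.2 k hk) (not_lt.1 hdeg))
  have ha := hs.mem_Icc (i := m) (by omega)
  have hb := hs.mem_Icc (i := m + 2) (by omega)
  have hmid := left_lt_add_div_two.2 hlt
  have hmid' := add_div_two_lt_right.2 hlt
  have hsplit := cellValue_lt_add hf
    (fun t ht => hf_pos t ⟨ha.1.trans ht.1.le, ht.2.le.trans hb.2⟩)
    (hu.subset (Icc_subset_Icc ha.1 hb.2) (convex_Icc _ _)) hmid hmid'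
  have hle := cellValue_add_le_of_forall_payoffV_le hs hmax hm ⟨hmid.le, hmid'.le⟩
  have hmerge : cellValue f u (s m) (s (m + 1)) + cellValue f u (s (m + 1)) (s (m + 2)) =
      cellValue f u (s m) (s (m + 2)) := by
    rcases hpivot with h | h <;> simp [h]
  linarith

lemma eq_condMean_deriv_deriv_of_forall_payoffV_le (hf : Continuous f)
    (hf_pos : ∀ t ∈ Icc (0:ℝ) 1, 0 < f t) (hu : ContDiff ℝ 2 u)
    (hu'' : ∀ t ∈ Icc (0:ℝ) 1, 0 < deriv (deriv u) t) (hs : IsCutoffs N s)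
    (hmax : ∀ t, IsCutoffs N t → payoffV f u N t ≤ payoffV f u N s)
    (hstrict : ∀ k < N, s k < s (k + 1)) {m : ℕ} (hm : m + 1 < N) :
    s (m + 1) = condMean (deriv (deriv u))
      (condMean f (s m) (s (m + 1))) (condMean f (s (m + 1)) (s (m + 2))) := by
  have ha := hs.mem_Icc (i := m) (by omega)
  have hb := hs.mem_Icc (i := m + 2) (by omega)
  have hax := hstrict m (by omega)
  have hxb := hstrict (m + 1) hm
  have hpos : ∀ t ∈ Icc (s m) (s (m + 2)), 0 < f t :=
    fun t ht => hf_pos t ⟨ha.1.trans ht.1, ht.2.trans hb.2⟩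
  have hpos₁ : ∀ t ∈ Ioo (s m) (s (m + 1)), 0 < f t :=
    fun t ht => hpos t ⟨ht.1.le, ht.2.le.trans hxb.le⟩
  have hpos₂ : ∀ t ∈ Ioo (s (m + 1)) (s (m + 2)), 0 < f t :=
    fun t ht => hpos t ⟨hax.le.trans ht.1.le, ht.2.le⟩
  have hx₁ := condMean_mem_Ioo hf hpos₁ hax
  have hx₂ := condMean_mem_Ioo hf hpos₂ hxb
  set x₁ := condMean f (s m) (s (m + 1))
  set x₂ := condMean f (s (m + 1)) (s (m + 2))
  have hlocal : IsLocalMax (fun y => cellValue f u (s m) y + cellValue f u y (s (m + 2)))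
      (s (m + 1)) :=
    Filter.eventually_of_mem (Icc_mem_nhds hax hxb) fun y hy =>
      cellValue_add_le_of_forall_payoffV_le hs hmax hm hy
  have hzero := hlocal.hasDerivAt_eq_zero
    ((hasDerivAt_cellValue_right hf
      (intervalIntegral_pos_of_pos_on (hf.intervalIntegrable _ _) hpos₁ hax).ne'
      (hu.differentiable two_ne_zero _)).add
    (hasDerivAt_cellValue_left hf
      (intervalIntegral_pos_of_pos_on (hf.intervalIntegrable _ _) hpos₂ hxb).ne'
      (hu.differentiable two_ne_zero _)))
  have htangent :
      u x₁ + deriv u x₁ * (s (m + 1) - x₁) = u x₂ + deriv u x₂ * (s (m + 1) - x₂) :=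
    mul_left_cancel₀ (hpos _ ⟨hax.le, hxb.le⟩).ne' (by linarith)
  have hden : 0 < ∫ t in x₁..x₂, deriv (deriv u) t :=
    intervalIntegral_pos_of_pos_on (hu.deriv'.continuous_deriv_one.intervalIntegrable _ _)
      (fun t ht => hu'' t
        ⟨ha.1.trans (hx₁.1.le.trans ht.1.le), ht.2.le.trans (hx₂.2.le.trans hb.2)⟩)
      (hx₁.2.trans hx₂.1)
  exact (condMean_deriv_deriv_eq_of_tangent_eq hu hden.ne' htangent).symm

end optimalCutoffs

theorem stmt_0_general (f u : ℝ → ℝ) (N : ℕ)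
    (hf_cont : Continuous f) (hf_pos : ∀ t ∈ Icc (0:ℝ) 1, 0 < f t)
    (hu : ContDiff ℝ 2 u)
    (hu'' : ∀ t ∈ Icc (0:ℝ) 1, 0 < deriv (deriv u) t)
    (s : ℕ → ℝ) (hs0 : s 0 = 0) (hsN : s N = 1)
    (hmono : ∀ k < N, s k ≤ s (k + 1))
    (hmax : ∀ t : ℕ → ℝ, t 0 = 0 → t N = 1 → (∀ k < N, t k ≤ t (k + 1)) →
      payoffV f u N t ≤ payoffV f u N s) :
    (∀ k < N, s k < s (k + 1)) ∧
    (∀ k, 1 ≤ k → k ≤ N - 1 →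
      s k = condMean (deriv (deriv u))
        (condMean f (s (k - 1)) (s k)) (condMean f (s k) (s (k + 1)))) := by
  have hs : IsCutoffs N s := ⟨hs0, hsN, hmono⟩
  have hopt : ∀ t, IsCutoffs N t → payoffV f u N t ≤ payoffV f u N s :=
    fun t ht => hmax t ht.1 ht.2.1 ht.2.2
  have hconv : StrictConvexOn ℝ (Icc 0 1) u :=
    strictConvexOn_of_deriv2_pos (convex_Icc 0 1) hu.continuous.continuousOn
      fun x hx => hu'' x (interior_subset hx)
  have hstrict := lt_succ_of_forall_payoffV_le hf_cont hf_pos hconv hs hopt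
  refine ⟨hstrict, fun k hk1 hkN => ?_⟩
  obtain ⟨m, rfl⟩ : ∃ m, k = m + 1 := ⟨k - 1, by omega⟩
  exact eq_condMean_deriv_deriv_of_forall_payoffV_le hf_cont hf_pos hu hu'' hs hopt hstrict
    (by omega)

/-- dual expectations property of a maximizer. -/
theorem stmt_0 (f u : ℝ → ℝ) (N : ℕ) (hN : 2 ≤ N)
    (hf_cont : Continuous f) (hf_pos : ∀ t ∈ Icc (0:ℝ) 1, 0 < f t)
    (hf_prob : (∫ t in (0:ℝ)..1, f t) = 1)
    (hu : ContDiff ℝ 2 u)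
    (hu'' : ∀ t ∈ Icc (0:ℝ) 1, 0 < deriv (deriv u) t)
    (s : ℕ → ℝ) (hs0 : s 0 = 0) (hsN : s N = 1)
    (hmono : ∀ k < N, s k ≤ s (k + 1))
    (hmax : ∀ t : ℕ → ℝ, t 0 = 0 → t N = 1 → (∀ k < N, t k ≤ t (k + 1)) →
      payoffV f u N t ≤ payoffV f u N s) :
    (∀ k < N, s k < s (k + 1)) ∧
    (∀ k, 1 ≤ k → k ≤ N - 1 →
      s k = condMean (deriv (deriv u))
        (condMean f (s (k - 1)) (s k)) (condMean f (s k) (s (k + 1)))) :=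
  stmt_0_general f u N hf_cont hf_pos hu hu'' s hs0 hsN hmono hmax
end

section
/- If f and u'' are both logconcave, then for every integer N ≥ 2 the dual system has at most one solution: if (0 = s₀ < s₁ < … < s_N = 1; x₁,…,x_N) and (0 = s₀' < s₁' < … < s_N' = 1; x₁',…,x_N') both satisfy x_k = φ(s_{k−1}, s_k) for k = 1,…,N and s_k = μ(x_k, x_{k+1}) for k = 1,…,N−1 (and analogously for the primed sequences), then s_k = s_k' for all k and x_k = x_k' for all k. -/
/-!
Interleave cutoffs and signals into one chain `0 = s₀ < x₁ < s₁ < ⋯ < x_N < s_N = 1` in which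
every interior point is the conditional mean, for `f` or `u''`, of its two neighbours.
Log-concavity of the weight means that shifting an interval by `m ≥ 0` moves its conditional
mean by at most `m`. For two such chains this forces the gaps `d j = z' j - z j` to grow:
`0 ≤ d (j - 1) < d j` implies `d j < d (j + 1)`. So `d 1 > 0` would make the gaps increase
strictly up to `d (2N) = 0`, which is absurd; by symmetry `d 1 = 0`, and strict monotonicity of
the conditional mean in its right endpoint then propagates equality along the chain.
-/

open MeasureTheory Set

/-- A strictly positive function on `[0,1]` is logconcave if its log is concave there. -/
def LogConcaveOn01 (g : ℝ → ℝ) : Prop :=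
  ConcaveOn ℝ (Icc (0:ℝ) 1) fun t => Real.log (g t)

/-- The dual system: cutoffs `0 = s 0 < s 1 < … < s N = 1` and signals `x 1, …, x N`
with `x k` the conditional mean of `g` on `(s (k-1), s k)` and `s k` the conditional
mean of `w` on `(x k, x (k+1))`. -/
def DualSystem (g w : ℝ → ℝ) (N : ℕ) (s x : ℕ → ℝ) : Prop :=
  s 0 = 0 ∧ s N = 1 ∧ (∀ k < N, s k < s (k + 1)) ∧
    (∀ k, 1 ≤ k → k ≤ N → x k = condMean g (s (k - 1)) (s k)) ∧
    (∀ k, 1 ≤ k → k ≤ N - 1 → s k = condMean w (x k) (x (k + 1)))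

section CondMean

variable {g : ℝ → ℝ} {a b c : ℝ}

lemma integral_sub_mul (hg : Continuous g) (a b c : ℝ) :
    ∫ t in a..b, (t - c) * g t = (∫ t in a..b, t * g t) - c * ∫ t in a..b, g t := by
  simp_rw [sub_mul]
  rw [intervalIntegral.integral_sub (Continuous.intervalIntegrable (by fun_prop) _ _)
      (Continuous.intervalIntegrable (by fun_prop) _ _), intervalIntegral.integral_const_mul]

lemma integral_sub_mul_pos (hg : Continuous g) (hab : a < b) (hpos : ∀ t ∈ Ioo a b, 0 < g t)
    (hc : c ≤ a) : 0 < ∫ t in a..b, (t - c) * g t :=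
  intervalIntegral.intervalIntegral_pos_of_pos_on (Continuous.intervalIntegrable (by fun_prop) _ _)
    (fun t ht => mul_pos (by linarith [ht.1]) (hpos t ht)) hab

lemma integral_sub_mul_neg (hg : Continuous g) (hab : a < b) (hpos : ∀ t ∈ Ioo a b, 0 < g t)
    (hc : b ≤ c) : ∫ t in a..b, (t - c) * g t < 0 := by
  have : 0 < ∫ t in a..b, (c - t) * g t :=
    intervalIntegral.intervalIntegral_pos_of_pos_on
      (Continuous.intervalIntegrable (by fun_prop) _ _)
      (fun t ht => mul_pos (by linarith [ht.2]) (hpos t ht)) hab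
  simpa only [← neg_sub _ c, neg_mul, intervalIntegral.integral_neg, neg_pos] using this

lemma integral_sub_condMean_mul (hg : Continuous g) (hI : ∫ t in a..b, g t ≠ 0) :
    ∫ t in a..b, (t - condMean g a b) * g t = 0 := by
  rw [integral_sub_mul hg, condMean, div_mul_cancel₀ _ hI, sub_self]

lemma lt_condMean_iff (hg : Continuous g) (hab : a < b) (hpos : ∀ t ∈ Ioo a b, 0 < g t) :
    c < condMean g a b ↔ 0 < ∫ t in a..b, (t - c) * g t := by
  rw [condMean, lt_div_iff₀ (intervalIntegral.intervalIntegral_pos_of_pos_on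
    (hg.intervalIntegrable a b) hpos hab), integral_sub_mul hg, sub_pos]

lemma condMean_lt_iff (hg : Continuous g) (hab : a < b) (hpos : ∀ t ∈ Ioo a b, 0 < g t) :
    condMean g a b < c ↔ ∫ t in a..b, (t - c) * g t < 0 := by
  rw [condMean, div_lt_iff₀ (intervalIntegral.intervalIntegral_pos_of_pos_on
    (hg.intervalIntegrable a b) hpos hab), integral_sub_mul hg, sub_neg, mul_comm]

lemma condMean_le_iff (hg : Continuous g) (hab : a < b) (hpos : ∀ t ∈ Ioo a b, 0 < g t) :
    condMean g a b ≤ c ↔ ∫ t in a..b, (t - c) * g t ≤ 0 := by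
  simpa only [not_lt] using (lt_condMean_iff hg hab hpos).not

lemma lt_condMean (hg : Continuous g) (hab : a < b) (hpos : ∀ t ∈ Ioo a b, 0 < g t) :
    a < condMean g a b :=
  (lt_condMean_iff hg hab hpos).2 (integral_sub_mul_pos hg hab hpos le_rfl)

lemma condMean_lt (hg : Continuous g) (hab : a < b) (hpos : ∀ t ∈ Ioo a b, 0 < g t) :
    condMean g a b < b :=
  (condMean_lt_iff hg hab hpos).2 (integral_sub_mul_neg hg hab hpos le_rfl)

lemma condMean_strictMonoOn_right {r : ℝ} (hg : Continuous g) (hpos : ∀ t ∈ Ioo a r, 0 < g t) :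
    StrictMonoOn (condMean g a) (Ioc a r) := by
  intro b hb b' hb' hbb'
  have hposb : ∀ t ∈ Ioo a b, 0 < g t := fun t ht => hpos t ⟨ht.1, ht.2.trans_le hb.2⟩
  refine (lt_condMean_iff hg (hb.1.trans hbb') fun t ht => hpos t ⟨ht.1, ht.2.trans_le hb'.2⟩).2 ?_
  rw [← intervalIntegral.integral_add_adjacent_intervals
      (Continuous.intervalIntegrable (by fun_prop) _ _)
      (Continuous.intervalIntegrable (by fun_prop) _ _),
    integral_sub_condMean_mul hg
      (intervalIntegral.intervalIntegral_pos_of_pos_on (hg.intervalIntegrable a b) hposb hb.1).ne',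
    zero_add]
  exact integral_sub_mul_pos hg hbb' (fun t ht => hpos t ⟨hb.1.trans ht.1, ht.2.trans_le hb'.2⟩)
    (condMean_lt hg hb.1 hposb).le

lemma condMean_strictMonoOn_left {l : ℝ} (hg : Continuous g) (hpos : ∀ t ∈ Ioo l b, 0 < g t) :
    StrictMonoOn (fun a => condMean g a b) (Ico l b) := by
  intro a ha a' ha' haa'
  have hposa' : ∀ t ∈ Ioo a' b, 0 < g t := fun t ht => hpos t ⟨ha'.1.trans_lt ht.1, ht.2⟩
  refine (condMean_lt_iff hg (haa'.trans ha'.2) fun t ht => hpos t ⟨ha.1.trans_lt ht.1, ht.2⟩).2 ?_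
  rw [← intervalIntegral.integral_add_adjacent_intervals
      (Continuous.intervalIntegrable (by fun_prop) _ _)
      (Continuous.intervalIntegrable (by fun_prop) _ _),
    integral_sub_condMean_mul hg
      (intervalIntegral.intervalIntegral_pos_of_pos_on (hg.intervalIntegrable a' b) hposa'
        ha'.2).ne',
    add_zero]
  exact integral_sub_mul_neg hg haa' (fun t ht => hpos t ⟨ha.1.trans_lt ht.1, ht.2.trans ha'.2⟩)
    (lt_condMean hg ha'.2 hposa').le

end CondMean

lemma ConcaveOn.map_add_sub_map_le {S : Set ℝ} {h : ℝ → ℝ} (hh : ConcaveOn ℝ S h) {p q m : ℝ}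
    (hp : p ∈ S) (hqm : q + m ∈ S) (hpq : p ≤ q) (hm : 0 ≤ m) :
    h (q + m) - h q ≤ h (p + m) - h p := by
  rcases (hpq.trans (le_add_of_nonneg_right hm)).eq_or_lt with hpqm | hpqm
  · obtain rfl : q = p := by linarith
    obtain rfl : m = 0 := by linarith
    rfl
  -- `p + m` and `q` are the convex combinations of `p` and `q + m` with weights `(1 - θ, θ)`
  -- and `(θ, 1 - θ)`
  set θ := m / (q + m - p)
  have hθm : θ * (q + m - p) = m := div_mul_cancel₀ m (by linarith)
  have hθ : 0 ≤ θ := div_nonneg hm (by linarith)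
  have hθ1 : θ ≤ 1 := (div_le_one (by linarith)).2 (by linarith)
  have h1 := hh.2 hp hqm (sub_nonneg.2 hθ1) hθ (sub_add_cancel 1 θ)
  have h2 := hh.2 hp hqm hθ (sub_nonneg.2 hθ1) (add_sub_cancel θ 1)
  simp only [smul_eq_mul] at h1 h2
  rw [show (1 - θ) * p + θ * (q + m) = p + m by linear_combination hθm] at h1
  rw [show θ * p + (1 - θ) * (q + m) = q by linear_combination -hθm] at h2
  linarith

lemma mul_le_mul_of_concaveOn_log {S : Set ℝ} {g : ℝ → ℝ} (hpos : ∀ t ∈ S, 0 < g t)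
    (hlc : ConcaveOn ℝ S fun t => Real.log (g t)) {p q m : ℝ}
    (hp : p ∈ S) (hqm : q + m ∈ S) (hpq : p ≤ q) (hm : 0 ≤ m) :
    g (q + m) * g p ≤ g (p + m) * g q := by
  have hIcc := hlc.1.ordConnected.out hp hqm
  have hq : q ∈ S := hIcc ⟨hpq, by linarith⟩
  have hpm : p + m ∈ S := hIcc ⟨by linarith, by linarith⟩
  have := hlc.map_add_sub_map_le hp hqm hpq hm
  rw [← Real.log_le_log_iff (by have := hpos _ hqm; have := hpos _ hp; positivity)
    (by have := hpos _ hpm; have := hpos _ hq; positivity),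
    Real.log_mul (hpos _ hqm).ne' (hpos _ hp).ne', Real.log_mul (hpos _ hpm).ne' (hpos _ hq).ne']
  linarith

section LogConcave

variable {S : Set ℝ} {g : ℝ → ℝ} {a b : ℝ}

/- Log-concavity makes `t ↦ g (t + m) / g t` antitone, so `∫ (t - c) g (t + m)` over `[a, b]`
is at most `g (c + m) / g c * ∫ (t - c) g t = 0` for `c` the conditional mean. -/
theorem condMean_add_add_le (hg : Continuous g) (hpos : ∀ t ∈ S, 0 < g t)
    (hlc : ConcaveOn ℝ S fun t => Real.log (g t)) {m : ℝ} (ha : a ∈ S) (hbm : b + m ∈ S)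
    (hab : a < b) (hm : 0 ≤ m) :
    condMean g (a + m) (b + m) ≤ condMean g a b + m := by
  have hS : Icc a (b + m) ⊆ S := hlc.1.ordConnected.out ha hbm
  have hposab : ∀ t ∈ Ioo a b, 0 < g t := fun t ht => hpos t (hS ⟨ht.1.le, by linarith [ht.2]⟩)
  set c := condMean g a b
  have hac : a < c := lt_condMean hg hab hposab
  have hcb : c < b := condMean_lt hg hab hposab
  have hc : c ∈ S := hS ⟨hac.le, by linarith⟩
  have hcm : c + m ∈ S := hS ⟨by linarith, by linarith⟩
  have hratio : ∀ t ∈ Icc a b, (t - c) * g (t + m) ≤ g (c + m) / g c * ((t - c) * g t) := by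
    intro t ht
    rw [div_mul_eq_mul_div, le_div_iff₀ (hpos c hc)]
    rcases le_total c t with hct | htc
    · have := mul_le_mul_of_concaveOn_log hpos hlc hc
        (hS ⟨by linarith [ht.1], by linarith [ht.2]⟩) hct hm
      nlinarith
    · have := mul_le_mul_of_concaveOn_log hpos hlc (hS ⟨ht.1, by linarith [ht.2]⟩) hcm htc hm
      nlinarith
  rw [condMean_le_iff hg (by linarith) fun t ht => hpos t (hS ⟨by linarith [ht.1], ht.2.le⟩),
    ← intervalIntegral.integral_comp_add_right (fun t => (t - (c + m)) * g t)]
  calc ∫ t in a..b, (t + m - (c + m)) * g (t + m)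
      = ∫ t in a..b, (t - c) * g (t + m) := by simp only [add_sub_add_right_eq_sub]
    _ ≤ ∫ t in a..b, g (c + m) / g c * ((t - c) * g t) :=
        intervalIntegral.integral_mono_on hab.le (Continuous.intervalIntegrable (by fun_prop) _ _)
          (Continuous.intervalIntegrable (by fun_prop) _ _) hratio
    _ = 0 := by
        rw [intervalIntegral.integral_const_mul, integral_sub_condMean_mul hg
          (intervalIntegral.intervalIntegral_pos_of_pos_on (hg.intervalIntegrable a b) hposab
            hab).ne', mul_zero]

theorem condMean_sub_condMean_lt (hg : Continuous g) (hpos : ∀ t ∈ S, 0 < g t)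
    (hlc : ConcaveOn ℝ S fun t => Real.log (g t)) {a' b' : ℝ} (ha : a ∈ S) (hb : b ∈ S)
    (ha' : a' ∈ S) (hb' : b' ∈ S) (hab : a < b) (hab' : a' < b') (hu : 0 ≤ a' - a)
    (hgap : a' - a < condMean g a' b' - condMean g a b) :
    condMean g a' b' - condMean g a b < b' - b := by
  have hposab : ∀ t ∈ Ioo a b, 0 < g t :=
    fun t ht => hpos t (hlc.1.ordConnected.out ha hb (Ioo_subset_Icc_self ht))
  have hposab' : ∀ t ∈ Ioo a' b', 0 < g t :=
    fun t ht => hpos t (hlc.1.ordConnected.out ha' hb' (Ioo_subset_Icc_self ht))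
  rcases lt_trichotomy (a' - a) (b' - b) with huv | huv | hvu
  · have hshift := condMean_add_add_le hg hpos hlc ha (by rwa [add_sub_cancel]) hab
      (hu.trans huv.le)
    rw [add_sub_cancel] at hshift
    have hleft : condMean g a' b' < condMean g (a + (b' - b)) b' :=
      condMean_strictMonoOn_left hg hposab' ⟨le_rfl, hab'⟩ ⟨by linarith, by linarith⟩
        (by linarith)
    linarith
  · have hshift := condMean_add_add_le hg hpos hlc ha (by rwa [huv, add_sub_cancel]) hab hu
    rw [add_sub_cancel, huv, add_sub_cancel] at hshift
    linarith
  · have hshift := condMean_add_add_le (b := b' - (a' - a)) hg hpos hlc ha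
      (by rwa [sub_add_cancel]) (by linarith) hu
    rw [add_sub_cancel, sub_add_cancel] at hshift
    have hright : condMean g a (b' - (a' - a)) < condMean g a b :=
      condMean_strictMonoOn_right hg hposab ⟨by linarith, by linarith⟩ ⟨hab, le_rfl⟩
        (by linarith)
    linarith

end LogConcave

structure IsMeanChain (G : ℕ → ℝ → ℝ) (n : ℕ) (z : ℕ → ℝ) : Prop where
  zero : z 0 = 0
  last : z n = 1
  lt_succ : ∀ j < n, z j < z (j + 1)
  eq_condMean : ∀ j, j + 2 ≤ n → z (j + 1) = condMean (G (j + 1)) (z j) (z (j + 2))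

namespace IsMeanChain

variable {G : ℕ → ℝ → ℝ} {n : ℕ} {z z' : ℕ → ℝ}

lemma mem_Icc (hz : IsMeanChain G n z) {j : ℕ} (hj : j ≤ n) : z j ∈ Icc (0 : ℝ) 1 := by
  have hmono := (strictMonoOn_Iic_of_lt_succ hz.lt_succ).monotoneOn
  exact ⟨hz.zero ▸ hmono (Nat.zero_le n) hj (Nat.zero_le j),
    hz.last ▸ hmono hj (le_refl n) hj⟩

lemma lt_add_two (hz : IsMeanChain G n z) {j : ℕ} (hj : j + 2 ≤ n) : z j < z (j + 2) :=
  (hz.lt_succ j (by omega)).trans (hz.lt_succ (j + 1) (by omega))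

lemma gap_lt_gap (hz : IsMeanChain G n z) (hz' : IsMeanChain G n z')
    (hGc : ∀ j, Continuous (G j)) (hGpos : ∀ j, ∀ t ∈ Icc (0 : ℝ) 1, 0 < G j t)
    (hGlc : ∀ j, LogConcaveOn01 (G j)) {j : ℕ} (hj : j + 2 ≤ n) (h0 : 0 ≤ z' j - z j)
    (h1 : z' j - z j < z' (j + 1) - z (j + 1)) :
    z' (j + 1) - z (j + 1) < z' (j + 2) - z (j + 2) := by
  rw [hz.eq_condMean j hj, hz'.eq_condMean j hj] at h1 ⊢
  exact condMean_sub_condMean_lt (hGc _) (hGpos _) (hGlc _) (hz.mem_Icc (by omega))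
    (hz.mem_Icc hj) (hz'.mem_Icc (by omega)) (hz'.mem_Icc hj) (hz.lt_add_two hj)
    (hz'.lt_add_two hj) h0 h1

lemma apply_one_le (hz : IsMeanChain G n z) (hz' : IsMeanChain G n z')
    (hGc : ∀ j, Continuous (G j)) (hGpos : ∀ j, ∀ t ∈ Icc (0 : ℝ) 1, 0 < G j t)
    (hGlc : ∀ j, LogConcaveOn01 (G j)) (hn : 1 ≤ n) : z' 1 ≤ z 1 := by
  by_contra! h1
  have hgrow : ∀ j, j + 1 ≤ n → 0 ≤ z' j - z j ∧ z' j - z j < z' (j + 1) - z (j + 1) := by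
    intro j
    induction j with
    | zero => intro _; simp only [hz.zero, hz'.zero, sub_self, le_refl, sub_pos, h1, and_self]
    | succ j ih =>
      intro hj
      obtain ⟨h0, hlt⟩ := ih (by omega)
      exact ⟨by linarith, hz.gap_lt_gap hz' hGc hGpos hGlc hj h0 hlt⟩
  obtain ⟨h0, hlt⟩ := hgrow (n - 1) (by omega)
  rw [Nat.sub_add_cancel hn, hz.last, hz'.last] at hlt
  linarith

lemma eq_of_apply_one_eq (hz : IsMeanChain G n z) (hz' : IsMeanChain G n z')
    (hGc : ∀ j, Continuous (G j)) (hGpos : ∀ j, ∀ t ∈ Icc (0 : ℝ) 1, 0 < G j t)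
    (h1 : z 1 = z' 1) {j : ℕ} (hj : j ≤ n) : z j = z' j := by
  suffices h : ∀ j, j + 1 ≤ n → z j = z' j ∧ z (j + 1) = z' (j + 1) by
    rcases j with _ | j
    · rw [hz.zero, hz'.zero]
    · exact (h j hj).2
  intro j
  induction j with
  | zero => intro _; exact ⟨hz.zero.trans hz'.zero.symm, h1⟩
  | succ j ih =>
    intro hj
    obtain ⟨h0, hsucc⟩ := ih (by omega)
    refine ⟨hsucc, ?_⟩
    have hinj := (condMean_strictMonoOn_right (g := G (j + 1)) (a := z j) (r := 1) (hGc _)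
      fun t ht => hGpos _ t ⟨(hz.mem_Icc (by omega)).1.trans ht.1.le, ht.2.le⟩).injOn
    refine hinj ⟨hz.lt_add_two hj, (hz.mem_Icc hj).2⟩
      ⟨h0 ▸ hz'.lt_add_two hj, (hz'.mem_Icc hj).2⟩ ?_
    rw [← hz.eq_condMean j hj, hsucc, hz'.eq_condMean j hj, h0]

theorem unique (hz : IsMeanChain G n z) (hz' : IsMeanChain G n z')
    (hGc : ∀ j, Continuous (G j)) (hGpos : ∀ j, ∀ t ∈ Icc (0 : ℝ) 1, 0 < G j t)
    (hGlc : ∀ j, LogConcaveOn01 (G j)) {j : ℕ} (hj : j ≤ n) : z j = z' j := by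
  rcases Nat.eq_zero_or_pos n with rfl | hn
  · rw [Nat.le_zero.1 hj, hz.zero, hz'.zero]
  · exact hz.eq_of_apply_one_eq hz' hGc hGpos (le_antisymm
      (hz'.apply_one_le hz hGc hGpos hGlc hn) (hz.apply_one_le hz' hGc hGpos hGlc hn)) hj

end IsMeanChain

def interleave {α : Type*} (s x : ℕ → α) (j : ℕ) : α :=
  if j % 2 = 0 then s (j / 2) else x (j / 2 + 1)

section Interleave

variable {α : Type*} (s x : ℕ → α) (k : ℕ)

@[simp] lemma interleave_two_mul : interleave s x (2 * k) = s k := by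
  rw [interleave, if_pos (by omega), Nat.mul_div_cancel_left k two_pos]

@[simp] lemma interleave_two_mul_add_one : interleave s x (2 * k + 1) = x (k + 1) := by
  rw [interleave, if_neg (by omega)]
  congr 2
  omega

end Interleave

namespace DualSystem

variable {g w : ℝ → ℝ} {N : ℕ} {s x : ℕ → ℝ}

lemma mem_Ioo (hg : Continuous g) (hpos : ∀ t ∈ Icc (0 : ℝ) 1, 0 < g t)
    (h : DualSystem g w N s x) {k : ℕ} (hk : k < N) : x (k + 1) ∈ Ioo (s k) (s (k + 1)) := by
  obtain ⟨hs0, hsN, hlt, hx, -⟩ := h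
  have hmono := (strictMonoOn_Iic_of_lt_succ hlt).monotoneOn
  have hposk : ∀ t ∈ Ioo (s k) (s (k + 1)), 0 < g t := fun t ht =>
    hpos t ⟨hs0 ▸ (hmono (Nat.zero_le N) hk.le (Nat.zero_le k)).trans ht.1.le,
      hsN ▸ ht.2.le.trans (hmono (Nat.succ_le_of_lt hk) (le_refl N) (Nat.succ_le_of_lt hk))⟩
  rw [hx (k + 1) (by omega) hk, Nat.add_sub_cancel]
  exact ⟨lt_condMean hg (hlt k hk) hposk, condMean_lt hg (hlt k hk) hposk⟩

theorem isMeanChain (hg : Continuous g) (hpos : ∀ t ∈ Icc (0 : ℝ) 1, 0 < g t)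
    (h : DualSystem g w N s x) :
    IsMeanChain (interleave (fun _ => w) (fun _ => g)) (2 * N) (interleave s x) := by
  have ⟨hs0, hsN, _, hx, hs⟩ := h
  refine ⟨(interleave_two_mul s x 0).trans hs0, (interleave_two_mul s x N).trans hsN,
    fun j hj => ?_, fun j hj => ?_⟩
  · obtain ⟨k, rfl | rfl⟩ := Nat.even_or_odd' j
    · simpa using (h.mem_Ioo hg hpos (k := k) (by omega)).1
    · simpa [show 2 * k + 1 + 1 = 2 * (k + 1) by ring] using
        (h.mem_Ioo hg hpos (k := k) (by omega)).2
  · obtain ⟨k, rfl | rfl⟩ := Nat.even_or_odd' j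
    · simpa [show 2 * k + 2 = 2 * (k + 1) by ring] using hx (k + 1) (by omega) (by omega)
    · simpa [show 2 * k + 1 + 1 = 2 * (k + 1) by ring,
        show 2 * k + 1 + 2 = 2 * (k + 1) + 1 by ring] using hs (k + 1) (by omega) (by omega)

end DualSystem

theorem stmt_1_general (f u : ℝ → ℝ) (N : ℕ)
    (hf_cont : Continuous f) (hf_pos : ∀ t ∈ Icc (0:ℝ) 1, 0 < f t)
    (hu : ContDiff ℝ 2 u)
    (hu'' : ∀ t ∈ Icc (0:ℝ) 1, 0 < deriv (deriv u) t)
    (hf_lc : LogConcaveOn01 f) (hu_lc : LogConcaveOn01 (deriv (deriv u)))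
    (s x s' x' : ℕ → ℝ)
    (h1 : DualSystem f (deriv (deriv u)) N s x)
    (h2 : DualSystem f (deriv (deriv u)) N s' x') :
    (∀ k ≤ N, s k = s' k) ∧ (∀ k, 1 ≤ k → k ≤ N → x k = x' k) := by
  have hu''_cont : Continuous (deriv (deriv u)) := by
    exact (contDiff_succ_iff_deriv.mp (show ContDiff ℝ (1 + 1) u from hu)).2.2.continuous_deriv
      le_rfl
  have hG {P : (ℝ → ℝ) → Prop} (hf : P f) (hw : P (deriv (deriv u))) (j : ℕ) :
      P (interleave (fun _ => deriv (deriv u)) (fun _ => f) j) := by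
    unfold interleave
    split_ifs <;> assumption
  have heq {j : ℕ} (hj : j ≤ 2 * N) : interleave s x j = interleave s' x' j :=
    (h1.isMeanChain hf_cont hf_pos).unique (h2.isMeanChain hf_cont hf_pos) (hG hf_cont hu''_cont)
      (hG (P := fun g => ∀ t ∈ Icc (0:ℝ) 1, 0 < g t) hf_pos hu'') (hG hf_lc hu_lc) hj
  refine ⟨fun k hk => by simpa using heq (j := 2 * k) (by omega), fun k hk1 hkN => ?_⟩
  obtain ⟨k, rfl⟩ := Nat.exists_eq_add_of_le' hk1
  simpa using heq (j := 2 * k + 1) (by omega)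

/-- uniqueness of the dual system in a logconcave environment. -/
theorem stmt_1 (f u : ℝ → ℝ) (N : ℕ) (hN : 2 ≤ N)
    (hf_cont : Continuous f) (hf_pos : ∀ t ∈ Icc (0:ℝ) 1, 0 < f t)
    (hf_prob : (∫ t in (0:ℝ)..1, f t) = 1)
    (hu : ContDiff ℝ 2 u)
    (hu'' : ∀ t ∈ Icc (0:ℝ) 1, 0 < deriv (deriv u) t)
    (hf_lc : LogConcaveOn01 f) (hu_lc : LogConcaveOn01 (deriv (deriv u)))
    (s x s' x' : ℕ → ℝ)
    (h1 : DualSystem f (deriv (deriv u)) N s x)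
    (h2 : DualSystem f (deriv (deriv u)) N s' x') :
    (∀ k ≤ N, s k = s' k) ∧ (∀ k, 1 ≤ k → k ≤ N → x k = x' k) :=
  stmt_1_general f u N hf_cont hf_pos hu hu'' hf_lc hu_lc s x s' x' h1 h2
end

section
/- Suppose f is constant, i.e., f(t) = 1 for all t ∈ [0,1], and u'' is single-peaked: there exists m_u ∈ [0,1] such that u'' is nondecreasing on [0, m_u] and nonincreasing on [m_u, 1]. Let (0 = s₀ < s₁ < … < s_N = 1; x₁,…,x_N) be a solution of the dual system for some N ≥ 2, and suppose m_u ∈ [s_{k−1}, s_k] for some k ∈ {1,…,N}. Then the minimum of the interval widths w_i = s_i − s_{i−1} over i ∈ {1,…,N} is attained at some index i* with k−1 ≤ i* ≤ k+1. -/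
/-! With a uniform prior every signal `x i` is the midpoint of its cell, so the cutoff condition
reads `s i = condMean u'' (x i) (x (i + 1))`. Where `u''` is nondecreasing this conditional mean
lies right of the midpoint `(x i + x (i + 1)) / 2 = (s (i - 1) + 2 s i + s (i + 1)) / 4`, which says
precisely that cell `i + 1` is at most as wide as cell `i`; where `u''` is nonincreasing the
inequality reverses. Hence the widths decrease up to cell `k - 1` and increase from cell `k + 1`
on, and the narrowest of the cells `k - 1, k, k + 1` is the narrowest of all. -/

open MeasureTheory Set

section CondMean

variable {w : ℝ → ℝ} {a b : ℝ}

-- `t - m` and `w t - w m` have the same sign, and `∫ (t - m) = 0` on `[a, b]`.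
theorem integral_sub_midpoint_mul_nonneg_of_monotoneOn (hab : a ≤ b)
    (hw : MonotoneOn w (Icc a b)) : 0 ≤ ∫ t in a..b, (t - (a + b) / 2) * w t := by
  set m := (a + b) / 2 with hm_def
  have hm : m ∈ Icc a b := ⟨by linarith, by linarith⟩
  have hwi : IntervalIntegrable w volume a b := (uIcc_of_le hab ▸ hw).intervalIntegrable
  have hlin : Continuous fun t : ℝ => t - m := by fun_prop
  have hcentered : ∫ t in a..b, (t - m) * w t = ∫ t in a..b, (t - m) * (w t - w m) := by
    simp only [mul_sub]
    rw [intervalIntegral.integral_sub (hwi.continuousOn_mul hlin.continuousOn)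
        ((by fun_prop : Continuous fun t => (t - m) * w m).intervalIntegrable _ _),
      intervalIntegral.integral_mul_const,
      intervalIntegral.integral_sub intervalIntegral.intervalIntegrable_id intervalIntegrable_const]
    simp only [integral_id, intervalIntegral.integral_const, smul_eq_mul, m]
    ring
  rw [hcentered]
  refine intervalIntegral.integral_nonneg hab fun t ht => ?_
  rcases le_total t m with htm | hmt
  · exact mul_nonneg_of_nonpos_of_nonpos (by linarith) (sub_nonpos.2 (hw ht hm htm))
  · exact mul_nonneg (by linarith) (sub_nonneg.2 (hw hm ht hmt))

theorem condMean_sub_midpoint (hwi : IntervalIntegrable w volume a b)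
    (hw : ∫ t in a..b, w t ≠ 0) :
    condMean w a b - (a + b) / 2
      = (∫ t in a..b, (t - (a + b) / 2) * w t) / ∫ t in a..b, w t := by
  have htw : IntervalIntegrable (fun t => t * w t) volume a b :=
    hwi.continuousOn_mul continuousOn_id
  simp only [sub_mul]
  rw [intervalIntegral.integral_sub htw (hwi.continuousOn_mul continuousOn_const),
    intervalIntegral.integral_const_mul, condMean]
  field_simp

theorem midpoint_le_condMean_of_monotoneOn (hab : a < b) (hpos : ∀ t ∈ Ioo a b, 0 < w t)
    (hw : MonotoneOn w (Icc a b)) : (a + b) / 2 ≤ condMean w a b := by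
  have hwi : IntervalIntegrable w volume a b := (uIcc_of_le hab.le ▸ hw).intervalIntegrable
  have hD := intervalIntegral.intervalIntegral_pos_of_pos_on hwi hpos hab
  rw [← sub_nonneg, condMean_sub_midpoint hwi hD.ne']
  exact div_nonneg (integral_sub_midpoint_mul_nonneg_of_monotoneOn hab.le hw) hD.le

theorem condMean_le_midpoint_of_antitoneOn (hab : a < b) (hpos : ∀ t ∈ Ioo a b, 0 < w t)
    (hw : AntitoneOn w (Icc a b)) : condMean w a b ≤ (a + b) / 2 := by
  have hwi : IntervalIntegrable w volume a b := (uIcc_of_le hab.le ▸ hw).intervalIntegrable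
  have hD := intervalIntegral.intervalIntegral_pos_of_pos_on hwi hpos hab
  have hneg := integral_sub_midpoint_mul_nonneg_of_monotoneOn hab.le hw.neg
  simp only [mul_neg, intervalIntegral.integral_neg, neg_nonneg] at hneg
  rw [← sub_nonpos, condMean_sub_midpoint hwi hD.ne']
  exact div_nonpos_of_nonpos_of_nonneg hneg hD.le

theorem condMean_eq_midpoint_of_eqOn_one (hab : a < b) (hw : ∀ t ∈ Icc a b, w t = 1) :
    condMean w a b = (a + b) / 2 := by
  have hpos : ∀ t ∈ Ioo a b, 0 < w t := fun t ht => by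
    rw [hw t (Ioo_subset_Icc_self ht)]; norm_num
  refine le_antisymm (condMean_le_midpoint_of_antitoneOn hab hpos ?_)
    (midpoint_le_condMean_of_monotoneOn hab hpos ?_)
  · exact fun t ht t' ht' _ => by rw [hw t ht, hw t' ht']
  · exact fun t ht t' ht' _ => by rw [hw t ht, hw t' ht']

end CondMean

theorem exists_min_near_of_antitoneOn_of_monotoneOn {β : Type*} [LinearOrder β] {g : ℕ → β}
    {k N : ℕ} (hk1 : 1 ≤ k) (hkN : k ≤ N) (hl : AntitoneOn g (Icc 1 (k - 1)))
    (hr : MonotoneOn g (Icc (k + 1) N)) :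
    ∃ i, 1 ≤ i ∧ i ≤ N ∧ k - 1 ≤ i ∧ i ≤ k + 1 ∧
      ∀ j, 1 ≤ j → j ≤ N → g i ≤ g j := by
  obtain ⟨i, hi, hmin⟩ := (Finset.Icc (max (k - 1) 1) (min (k + 1) N)).exists_min_image g
    ⟨k, by simp only [Finset.mem_Icc]; omega⟩
  simp only [Finset.mem_Icc] at hi hmin
  refine ⟨i, by omega, by omega, by omega, by omega, fun j hj1 hjN => ?_⟩
  rcases lt_or_ge j (k - 1) with hj | hj
  · exact (hmin (k - 1) (by omega)).trans (hl ⟨hj1, hj.le⟩ ⟨by omega, le_rfl⟩ hj.le)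
  rcases le_or_gt j (k + 1) with hj' | hj'
  · exact hmin j (by omega)
  · exact (hmin (k + 1) (by omega)).trans (hr ⟨le_rfl, by omega⟩ ⟨hj'.le, hjN⟩ hj'.le)

namespace DualSystem

variable {f w : ℝ → ℝ} {N : ℕ} {s x : ℕ → ℝ}

theorem strictMonoOn (h : DualSystem f w N s x) : StrictMonoOn s (Iic N) :=
  strictMonoOn_of_lt_add_one ordConnected_Iic fun i _ _ hi => h.2.2.1 i hi

theorem cutoff_lt_cutoff (h : DualSystem f w N s x) {i j : ℕ} (hij : i < j) (hj : j ≤ N) :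
    s i < s j :=
  h.strictMonoOn (show i ≤ N by omega) hj hij

theorem cutoff_le_cutoff (h : DualSystem f w N s x) {i j : ℕ} (hij : i ≤ j) (hj : j ≤ N) :
    s i ≤ s j :=
  h.strictMonoOn.monotoneOn (show i ≤ N by omega) hj hij

theorem mem_Icc (h : DualSystem f w N s x) {i : ℕ} (hi : i ≤ N) : s i ∈ Icc 0 1 := by
  constructor
  · simpa only [h.1] using h.cutoff_le_cutoff (Nat.zero_le i) hi
  · simpa only [h.2.1] using h.cutoff_le_cutoff hi le_rfl

theorem x_eq_midpoint (h : DualSystem f w N s x) (hf : ∀ t ∈ Icc (0 : ℝ) 1, f t = 1) {i : ℕ}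
    (hi1 : 1 ≤ i) (hiN : i ≤ N) : x i = (s (i - 1) + s i) / 2 := by
  rw [h.2.2.2.1 i hi1 hiN, condMean_eq_midpoint_of_eqOn_one (h.cutoff_lt_cutoff (by omega) hiN)]
  exact fun t ht => hf t (Icc_subset_Icc (h.mem_Icc (by omega)).1 (h.mem_Icc hiN).2 ht)

theorem eq_condMean_midpoints (h : DualSystem f w N s x) (hf : ∀ t ∈ Icc (0 : ℝ) 1, f t = 1)
    {i : ℕ} (hi1 : 1 ≤ i) (hiN : i + 1 ≤ N) :
    s i = condMean w ((s (i - 1) + s i) / 2) ((s i + s (i + 1)) / 2) := by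
  have hs := h.2.2.2.2 i hi1 (by omega)
  rwa [h.x_eq_midpoint hf hi1 (by omega), h.x_eq_midpoint hf (by omega) hiN,
    Nat.add_sub_cancel] at hs

theorem width_succ_le (h : DualSystem f w N s x) (hf : ∀ t ∈ Icc (0 : ℝ) 1, f t = 1)
    {i : ℕ} (hi1 : 1 ≤ i) (hiN : i + 1 ≤ N)
    (hpos : ∀ t ∈ Icc (s (i - 1)) (s (i + 1)), 0 < w t)
    (hw : MonotoneOn w (Icc (s (i - 1)) (s (i + 1)))) : s (i + 1) - s i ≤ s i - s (i - 1) := by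
  have h₀ := h.cutoff_lt_cutoff (i := i - 1) (j := i) (by omega) (by omega)
  have h₁ := h.cutoff_lt_cutoff (Nat.lt_succ_self i) hiN
  have hsub : Icc ((s (i - 1) + s i) / 2) ((s i + s (i + 1)) / 2) ⊆ Icc (s (i - 1)) (s (i + 1)) :=
    Icc_subset_Icc (by linarith) (by linarith)
  have := midpoint_le_condMean_of_monotoneOn (by linarith)
    (fun t ht => hpos t (hsub (Ioo_subset_Icc_self ht))) (hw.mono hsub)
  rw [← h.eq_condMean_midpoints hf hi1 hiN] at this
  linarith

theorem width_le_width_succ (h : DualSystem f w N s x) (hf : ∀ t ∈ Icc (0 : ℝ) 1, f t = 1)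
    {i : ℕ} (hi1 : 1 ≤ i) (hiN : i + 1 ≤ N)
    (hpos : ∀ t ∈ Icc (s (i - 1)) (s (i + 1)), 0 < w t)
    (hw : AntitoneOn w (Icc (s (i - 1)) (s (i + 1)))) : s i - s (i - 1) ≤ s (i + 1) - s i := by
  have h₀ := h.cutoff_lt_cutoff (i := i - 1) (j := i) (by omega) (by omega)
  have h₁ := h.cutoff_lt_cutoff (Nat.lt_succ_self i) hiN
  have hsub : Icc ((s (i - 1) + s i) / 2) ((s i + s (i + 1)) / 2) ⊆ Icc (s (i - 1)) (s (i + 1)) :=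
    Icc_subset_Icc (by linarith) (by linarith)
  have := condMean_le_midpoint_of_antitoneOn (by linarith)
    (fun t ht => hpos t (hsub (Ioo_subset_Icc_self ht))) (hw.mono hsub)
  rw [← h.eq_condMean_midpoints hf hi1 hiN] at this
  linarith

end DualSystem

theorem stmt_4_general (f u : ℝ → ℝ)
    (hf_one : ∀ t ∈ Icc (0:ℝ) 1, f t = 1)
    (hu'' : ∀ t ∈ Icc (0:ℝ) 1, 0 < deriv (deriv u) t)
    (mu : ℝ)
    (huup : MonotoneOn (deriv (deriv u)) (Icc 0 mu))
    (hudown : AntitoneOn (deriv (deriv u)) (Icc mu 1))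
    (N : ℕ) (s x : ℕ → ℝ)
    (hds : DualSystem f (deriv (deriv u)) N s x)
    (k : ℕ) (hk1 : 1 ≤ k) (hkN : k ≤ N)
    (hmuk : mu ∈ Icc (s (k - 1)) (s k)) :
    ∃ istar, 1 ≤ istar ∧ istar ≤ N ∧ k - 1 ≤ istar ∧ istar ≤ k + 1 ∧
      ∀ i, 1 ≤ i → i ≤ N → s istar - s (istar - 1) ≤ s i - s (i - 1) := by
  have hpos : ∀ i, i + 1 ≤ N → ∀ t ∈ Icc (s (i - 1)) (s (i + 1)), 0 < deriv (deriv u) t :=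
    fun i hi t ht => hu'' t (Icc_subset_Icc (hds.mem_Icc (by omega)).1 (hds.mem_Icc hi).2 ht)
  refine exists_min_near_of_antitoneOn_of_monotoneOn (g := fun i => s i - s (i - 1)) hk1 hkN
    (antitoneOn_of_add_one_le ordConnected_Icc fun i _ ⟨hi1, _⟩ ⟨_, hik⟩ => ?_)
    (monotoneOn_of_le_add_one ordConnected_Icc fun i _ ⟨hki, _⟩ ⟨_, hiN⟩ => ?_)
  · have hle : s (i + 1) ≤ mu := (hds.cutoff_le_cutoff hik (by omega)).trans hmuk.1
    simpa only [Nat.add_sub_cancel] using hds.width_succ_le hf_one hi1 (by omega)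
      (hpos i (by omega)) (huup.mono (Icc_subset_Icc (hds.mem_Icc (by omega)).1 hle))
  · have hle : mu ≤ s (i - 1) := hmuk.2.trans (hds.cutoff_le_cutoff (by omega) (by omega))
    simpa only [Nat.add_sub_cancel] using hds.width_le_width_succ hf_one (by omega) hiN
      (hpos i hiN) (hudown.mono (Icc_subset_Icc hle (hds.mem_Icc hiN).2))

/-- center of scrutiny with uniform prior and single-peaked curvature. -/
theorem stmt_4 (f u : ℝ → ℝ)
    (hf_cont : Continuous f) (hf_one : ∀ t ∈ Icc (0:ℝ) 1, f t = 1)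
    (hu : ContDiff ℝ 2 u)
    (hu'' : ∀ t ∈ Icc (0:ℝ) 1, 0 < deriv (deriv u) t)
    (mu : ℝ) (hmu : mu ∈ Icc (0:ℝ) 1)
    (huup : MonotoneOn (deriv (deriv u)) (Icc 0 mu))
    (hudown : AntitoneOn (deriv (deriv u)) (Icc mu 1))
    (N : ℕ) (hN : 2 ≤ N) (s x : ℕ → ℝ)
    (hds : DualSystem f (deriv (deriv u)) N s x)
    (k : ℕ) (hk1 : 1 ≤ k) (hkN : k ≤ N)
    (hmuk : mu ∈ Icc (s (k - 1)) (s k)) :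
    ∃ istar, 1 ≤ istar ∧ istar ≤ N ∧ k - 1 ≤ istar ∧ istar ≤ k + 1 ∧
      ∀ i, 1 ≤ i → i ≤ N → s istar - s (istar - 1) ≤ s i - s (i - 1) :=
  stmt_4_general f u hf_one hu'' mu huup hudown N s x hds k hk1 hkN hmuk
end

section
/- Suppose f is single-peaked with mode m_f (f nondecreasing on [0, m_f], nonincreasing on [m_f, 1]) and u'' is single-peaked with mode m_u (u'' nondecreasing on [0, m_u], nonincreasing on [m_u, 1]). Let (0 = s₀ < s₁ < … < s_N = 1; x₁,…,x_N) be a solution of the dual system for some N ≥ 2, and suppose m_f ∈ [s_{j−1}, s_j] and m_u ∈ [s_{k−1}, s_k] with k ≤ j. Then the minimum of the interval widths w_i = s_i − s_{i−1} over i ∈ {1,…,N} is attained at some index i* with k−1 ≤ i* ≤ j+1. -/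
open MeasureTheory Set

lemma aux_int_pos {g : ℝ → ℝ} (hg : Continuous g) {a b : ℝ} (hab : a < b)
    (hpos : ∀ t ∈ Icc a b, 0 < g t) : 0 < ∫ t in a..b, g t :=
  intervalIntegral.intervalIntegral_pos_of_pos_on (hg.intervalIntegrable a b)
    (fun t ht => hpos t ⟨ht.1.le, ht.2.le⟩) hab

lemma aux_condMean_mem {g : ℝ → ℝ} (hg : Continuous g) {a b : ℝ} (hab : a < b)
    (hpos : ∀ t ∈ Icc a b, 0 < g t) : condMean g a b ∈ Ioo a b := by
  have hI : 0 < ∫ t in a..b, g t := aux_int_pos hg hab hpos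
  have hint : IntervalIntegrable (fun t => t * g t) volume a b :=
    (continuous_id.mul hg).intervalIntegrable a b
  have h1 : 0 < ∫ t in a..b, (t - a) * g t :=
    intervalIntegral.intervalIntegral_pos_of_pos_on
      (((continuous_id.sub continuous_const).mul hg).intervalIntegrable a b)
      (fun t ht => mul_pos (sub_pos.2 ht.1) (hpos t ⟨ht.1.le, ht.2.le⟩)) hab
  have h2 : 0 < ∫ t in a..b, (b - t) * g t :=
    intervalIntegral.intervalIntegral_pos_of_pos_on
      (((continuous_const.sub continuous_id).mul hg).intervalIntegrable a b)
      (fun t ht => mul_pos (sub_pos.2 ht.2) (hpos t ⟨ht.1.le, ht.2.le⟩)) hab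
  have e1 : (∫ t in a..b, (t - a) * g t)
      = (∫ t in a..b, t * g t) - a * ∫ t in a..b, g t := by
    rw [← intervalIntegral.integral_const_mul,
      ← intervalIntegral.integral_sub hint ((hg.intervalIntegrable a b).const_mul a)]
    congr 1; ext t; ring
  have e2 : (∫ t in a..b, (b - t) * g t)
      = b * (∫ t in a..b, g t) - ∫ t in a..b, t * g t := by
    rw [← intervalIntegral.integral_const_mul,
      ← intervalIntegral.integral_sub ((hg.intervalIntegrable a b).const_mul b) hint]
    congr 1; ext t; ring
  constructor
  · rw [condMean, lt_div_iff₀ hI]; linarith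
  · rw [condMean, div_lt_iff₀ hI]; linarith

lemma aux_reflect {g : ℝ → ℝ} (hg : Continuous g) {a b : ℝ} (hab : a ≤ b) :
    (∫ t in a..b, (t - (a+b)/2) * g t)
      = ∫ t in ((a+b)/2)..b, (t - (a+b)/2) * (g t - g (a + b - t)) := by
  set c := (a+b)/2 with hc
  have hac : a ≤ c := by rw [hc]; linarith
  have hcb : c ≤ b := by rw [hc]; linarith
  have hcont : Continuous (fun t => (t - c) * g t) :=
    (continuous_id.sub continuous_const).mul hg
  have hcont2 : Continuous (fun t => (t - c) * g (a + b - t)) :=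
    (continuous_id.sub continuous_const).mul
      (hg.comp (continuous_const.sub continuous_id))
  have hsplit : (∫ t in a..b, (t - c) * g t)
      = (∫ t in a..c, (t - c) * g t) + ∫ t in c..b, (t - c) * g t :=
    (intervalIntegral.integral_add_adjacent_intervals
      (hcont.intervalIntegrable a c) (hcont.intervalIntegrable c b)).symm
  have hrefl : (∫ t in a..c, (t - c) * g t)
      = ∫ t in c..b, (c - t) * g (a + b - t) := by
    have h := intervalIntegral.integral_comp_sub_left
      (a := c) (b := b) (fun t => (t - c) * g t) (a + b)
    have e1 : a + b - b = a := by ring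
    have e2 : a + b - c = c := by rw [hc]; ring
    rw [e1, e2] at h
    rw [← h]
    congr 1; ext t
    have : a + b - t - c = c - t := by rw [hc]; ring
    rw [this]
  have hadd : (∫ t in c..b, (t - c) * g t) + ∫ t in c..b, (c - t) * g (a + b - t)
      = ∫ t in c..b, ((t - c) * g t + (c - t) * g (a + b - t)) :=
    (intervalIntegral.integral_add (hcont.intervalIntegrable c b)
      (((continuous_const.sub continuous_id).mul
        (hg.comp (continuous_const.sub continuous_id))).intervalIntegrable c b)).symm
  rw [hsplit, hrefl, add_comm, hadd]
  congr 1; ext t; ring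

lemma aux_mid_le {g : ℝ → ℝ} (hg : Continuous g) {a b : ℝ} (hab : a < b)
    (hmono : MonotoneOn g (Icc a b)) (hI : 0 < ∫ t in a..b, g t) :
    (a + b) / 2 ≤ condMean g a b := by
  set c := (a+b)/2 with hc
  have hac : a ≤ c := by rw [hc]; linarith
  have hcb : c ≤ b := by rw [hc]; linarith
  have key : 0 ≤ ∫ t in a..b, (t - c) * g t := by
    rw [aux_reflect hg hab.le]
    apply intervalIntegral.integral_nonneg hcb
    intro t ht
    have hct : c ≤ t := ht.1
    have h1 : a + b - t ∈ Icc a b := ⟨by rw [hc] at hct; linarith [ht.2], by linarith [ht.1, hac]⟩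
    have h2 : t ∈ Icc a b := ⟨le_trans hac ht.1, ht.2⟩
    have h3 : a + b - t ≤ t := by rw [hc] at hct; linarith
    have h4 : g (a + b - t) ≤ g t := hmono h1 h2 h3
    have h5 : 0 ≤ t - c := by linarith [ht.1]
    nlinarith
  have hint : IntervalIntegrable (fun t => t * g t) volume a b :=
    (continuous_id.mul hg).intervalIntegrable a b
  have e1 : (∫ t in a..b, (t - c) * g t)
      = (∫ t in a..b, t * g t) - c * ∫ t in a..b, g t := by
    rw [← intervalIntegral.integral_const_mul,
      ← intervalIntegral.integral_sub hint ((hg.intervalIntegrable a b).const_mul c)]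
    congr 1; ext t; ring
  rw [condMean, le_div_iff₀ hI]; linarith

lemma aux_le_mid {g : ℝ → ℝ} (hg : Continuous g) {a b : ℝ} (hab : a < b)
    (hanti : AntitoneOn g (Icc a b)) (hI : 0 < ∫ t in a..b, g t) :
    condMean g a b ≤ (a + b) / 2 := by
  set c := (a+b)/2 with hc
  have hac : a ≤ c := by rw [hc]; linarith
  have hcb : c ≤ b := by rw [hc]; linarith
  have key : (∫ t in a..b, (t - c) * g t) ≤ 0 := by
    rw [aux_reflect hg hab.le]
    rw [← neg_nonneg, ← intervalIntegral.integral_neg]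
    apply intervalIntegral.integral_nonneg hcb
    intro t ht
    have hct : c ≤ t := ht.1
    have h1 : a + b - t ∈ Icc a b := ⟨by rw [hc] at hct; linarith [ht.2], by linarith [ht.1, hac]⟩
    have h2 : t ∈ Icc a b := ⟨le_trans hac ht.1, ht.2⟩
    have h3 : a + b - t ≤ t := by rw [hc] at hct; linarith
    have h4 : g t ≤ g (a + b - t) := hanti h1 h2 h3
    have h5 : 0 ≤ t - c := by linarith [ht.1]
    nlinarith
  have hint : IntervalIntegrable (fun t => t * g t) volume a b :=
    (continuous_id.mul hg).intervalIntegrable a b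
  have e1 : (∫ t in a..b, (t - c) * g t)
      = (∫ t in a..b, t * g t) - c * ∫ t in a..b, g t := by
    rw [← intervalIntegral.integral_const_mul,
      ← intervalIntegral.integral_sub hint ((hg.intervalIntegrable a b).const_mul c)]
    congr 1; ext t; ring
  rw [condMean, div_le_iff₀ hI]; linarith

/-- center of scrutiny with single-peaked prior and single-peaked curvature. -/
theorem stmt_5 (f u : ℝ → ℝ)
    (hf_cont : Continuous f) (hf_pos : ∀ t ∈ Icc (0:ℝ) 1, 0 < f t)
    (hf_prob : (∫ t in (0:ℝ)..1, f t) = 1)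
    (hu : ContDiff ℝ 2 u)
    (hu'' : ∀ t ∈ Icc (0:ℝ) 1, 0 < deriv (deriv u) t)
    (mf : ℝ) (hmf : mf ∈ Icc (0:ℝ) 1)
    (hfup : MonotoneOn f (Icc 0 mf)) (hfdown : AntitoneOn f (Icc mf 1))
    (mu : ℝ) (hmu : mu ∈ Icc (0:ℝ) 1)
    (huup : MonotoneOn (deriv (deriv u)) (Icc 0 mu))
    (hudown : AntitoneOn (deriv (deriv u)) (Icc mu 1))
    (N : ℕ) (hN : 2 ≤ N) (s x : ℕ → ℝ)
    (hds : DualSystem f (deriv (deriv u)) N s x)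
    (j : ℕ) (hj1 : 1 ≤ j) (hjN : j ≤ N)
    (hmfj : mf ∈ Icc (s (j - 1)) (s j))
    (k : ℕ) (hk1 : 1 ≤ k) (hkN : k ≤ N)
    (hmuk : mu ∈ Icc (s (k - 1)) (s k))
    (hkj : k ≤ j) :
    ∃ istar, 1 ≤ istar ∧ istar ≤ N ∧ k - 1 ≤ istar ∧ istar ≤ j + 1 ∧
      ∀ i, 1 ≤ i → i ≤ N → s istar - s (istar - 1) ≤ s i - s (i - 1) := by
  obtain ⟨hs0, hsN, hslt, hx, hsx⟩ := hds
  set w := deriv (deriv u) with hw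
  -- continuity of u''
  have hw_cont : Continuous w := by
    have h2 : ContDiff ℝ ((1 : WithTop ℕ∞) + 1) u := by
      rw [one_add_one_eq_two]; exact hu
    have h1 := (contDiff_succ_iff_deriv.mp h2).2.2
    exact h1.continuous_deriv le_rfl
  -- monotonicity of s
  have smono : ∀ p q, p ≤ q → q ≤ N → s p ≤ s q := by
    have key : ∀ d p, p + d ≤ N → s p ≤ s (p + d) := by
      intro d
      induction d with
      | zero => intro p _; simp
      | succ n ih =>
        intro p hp
        have h1 := ih p (by omega)
        have h2 := (hslt (p + n) (by omega)).le
        calc s p ≤ s (p + n) := h1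
          _ ≤ s (p + n + 1) := h2
    intro p q hpq hqN
    have := key (q - p) p (by omega)
    have e : p + (q - p) = q := by omega
    rwa [e] at this
  have sstrict : ∀ p q, p < q → q ≤ N → s p < s q := by
    intro p q hpq hqN
    have h1 : s p ≤ s (q - 1) := smono p (q - 1) (by omega) (by omega)
    have h2 : s (q - 1) < s (q - 1 + 1) := hslt (q - 1) (by omega)
    have e : q - 1 + 1 = q := by omega
    rw [e] at h2
    exact lt_of_le_of_lt h1 h2
  have s01 : ∀ p, p ≤ N → s p ∈ Icc (0:ℝ) 1 := by
    intro p hp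
    constructor
    · rw [← hs0]; exact smono 0 p (by omega) hp
    · rw [← hsN]; exact smono p N hp le_rfl
  -- x strictly inside
  have hxmem : ∀ i, 1 ≤ i → i ≤ N → x i ∈ Ioo (s (i - 1)) (s i) := by
    intro i h1 h2
    rw [hx i h1 h2]
    refine aux_condMean_mem hf_cont (sstrict (i-1) i (by omega) h2) ?_
    intro t ht
    exact hf_pos t ⟨le_trans (s01 (i-1) (by omega)).1 ht.1, le_trans ht.2 (s01 i h2).2⟩
  -- f-based midpoint inequalities
  have hA_ge_B : ∀ i, 1 ≤ i → i ≤ N → s i ≤ mf → s i - x i ≤ x i - s (i - 1) := by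
    intro i h1 h2 hle
    have hab : s (i-1) < s i := sstrict _ _ (by omega) h2
    have hm := aux_mid_le hf_cont hab
      (hfup.mono (Icc_subset_Icc (s01 (i-1) (by omega)).1 hle))
      (aux_int_pos hf_cont hab (fun t ht =>
        hf_pos t ⟨le_trans (s01 (i-1) (by omega)).1 ht.1, le_trans ht.2 (s01 i h2).2⟩))
    rw [← hx i h1 h2] at hm
    linarith
  have hB_le_A : ∀ i, 1 ≤ i → i ≤ N → mf ≤ s (i - 1) → x i - s (i - 1) ≤ s i - x i := by
    intro i h1 h2 hle
    have hab : s (i-1) < s i := sstrict _ _ (by omega) h2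
    have hm := aux_le_mid hf_cont hab
      (hfdown.mono (Icc_subset_Icc hle (s01 i h2).2))
      (aux_int_pos hf_cont hab (fun t ht =>
        hf_pos t ⟨le_trans (s01 (i-1) (by omega)).1 ht.1, le_trans ht.2 (s01 i h2).2⟩))
    rw [← hx i h1 h2] at hm
    linarith
  -- u''-based midpoint inequalities
  have hxlt : ∀ i, 1 ≤ i → i + 1 ≤ N → x i < x (i + 1) := by
    intro i h1 h2
    have e : (i + 1) - 1 = i := by omega
    have a1 := (hxmem i h1 (by omega)).2
    have a2 := (hxmem (i+1) (by omega) h2).1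
    rw [e] at a2
    linarith
  have hx01 : ∀ i, 1 ≤ i → i ≤ N → x i ∈ Icc (0:ℝ) 1 := by
    intro i h1 h2
    constructor
    · exact le_trans (s01 (i-1) (by omega)).1 (hxmem i h1 h2).1.le
    · exact le_trans (hxmem i h1 h2).2.le (s01 i h2).2
  have hBA' : ∀ i, 1 ≤ i → i + 1 ≤ N → x (i + 1) ≤ mu → x (i + 1) - s i ≤ s i - x i := by
    intro i h1 h2 hle
    have hab : x i < x (i+1) := hxlt i h1 h2
    have hm := aux_mid_le hw_cont hab
      (huup.mono (Icc_subset_Icc (hx01 i h1 (by omega)).1 hle))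
      (aux_int_pos hw_cont hab (fun t ht =>
        hu'' t ⟨le_trans (hx01 i h1 (by omega)).1 ht.1,
          le_trans ht.2 (hx01 (i+1) (by omega) h2).2⟩))
    rw [← hsx i h1 (by omega)] at hm
    linarith
  have hBA'' : ∀ i, 1 ≤ i → i + 1 ≤ N → mu ≤ x i → s i - x i ≤ x (i + 1) - s i := by
    intro i h1 h2 hle
    have hab : x i < x (i+1) := hxlt i h1 h2
    have hm := aux_le_mid hw_cont hab
      (hudown.mono (Icc_subset_Icc hle (hx01 (i+1) (by omega) h2).2))
      (aux_int_pos hw_cont hab (fun t ht =>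
        hu'' t ⟨le_trans (hx01 i h1 (by omega)).1 ht.1,
          le_trans ht.2 (hx01 (i+1) (by omega) h2).2⟩))
    rw [← hsx i h1 (by omega)] at hm
    linarith
  -- one-step width comparisons
  have stepL : ∀ i, 1 ≤ i → i + 1 ≤ k - 1 → s (i+1) - s i ≤ s i - s (i-1) := by
    intro i h1 h2
    have hiN : i + 1 ≤ N := by omega
    have hmf1 : s (i+1) ≤ mf :=
      le_trans (smono (i+1) (j-1) (by omega) (by omega)) hmfj.1
    have hmf2 : s i ≤ mf :=
      le_trans (smono i (j-1) (by omega) (by omega)) hmfj.1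
    have hxu : x (i+1) ≤ mu := by
      have h5 := (hxmem (i+1) (by omega) hiN).2.le
      exact le_trans h5 (le_trans (smono (i+1) (k-1) (by omega) (by omega)) hmuk.1)
    have e1 := hA_ge_B (i+1) (by omega) hiN hmf1
    have erw : (i + 1) - 1 = i := by omega
    rw [erw] at e1
    have e2 := hBA' i h1 hiN hxu
    have e3 := hA_ge_B i h1 (by omega) hmf2
    linarith
  have stepR : ∀ i, j + 1 ≤ i → i + 1 ≤ N → s i - s (i-1) ≤ s (i+1) - s i := by
    intro i h1 h2
    have hmf1 : mf ≤ s (i-1) :=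
      le_trans hmfj.2 (smono j (i-1) (by omega) (by omega))
    have hmf2 : mf ≤ s i := le_trans hmfj.2 (smono j i (by omega) (by omega))
    have hxu : mu ≤ x i := by
      have h5 := (hxmem i (by omega) (by omega)).1.le
      exact le_trans (le_trans hmuk.2 (smono k (i-1) (by omega) (by omega))) h5
    have e1 := hB_le_A i (by omega) (by omega) hmf1
    have e2 := hBA'' i (by omega) h2 hxu
    have e3 := hB_le_A (i+1) (by omega) h2 (by
      have erw : (i + 1) - 1 = i := by omega
      rw [erw]; exact hmf2)
    have erw : (i + 1) - 1 = i := by omega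
    rw [erw] at e3
    linarith
  -- chains
  have chainL : ∀ m i, 1 ≤ i → i + m ≤ k - 1 → s (i+m) - s (i+m-1) ≤ s i - s (i-1) := by
    intro m
    induction m with
    | zero => intro i h1 h2; simp
    | succ n ih =>
      intro i h1 h2
      have ha := ih i h1 (by omega)
      have hb := stepL (i+n) (by omega) (by omega)
      have e2 : i + (n+1) - 1 = i + n := by omega
      have e1 : i + (n+1) = i + n + 1 := by omega
      rw [e2, e1]
      linarith
  have chainR : ∀ m i, j + 1 ≤ i → i + m ≤ N → s i - s (i-1) ≤ s (i+m) - s (i+m-1) := by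
    intro m
    induction m with
    | zero => intro i h1 h2; simp
    | succ n ih =>
      intro i h1 h2
      have ha := ih i h1 (by omega)
      have hb := stepR (i+n) (by omega) (by omega)
      have e2 : i + (n+1) - 1 = i + n := by omega
      have e1 : i + (n+1) = i + n + 1 := by omega
      rw [e2, e1]
      linarith
  -- argmin over the window
  have hlo : max 1 (k-1) ≤ min N (j+1) := by omega
  obtain ⟨istar, hmem, hmin⟩ := Finset.exists_min_image
    (Finset.Icc (max 1 (k-1)) (min N (j+1))) (fun i => s i - s (i-1))
    ⟨max 1 (k-1), Finset.mem_Icc.2 ⟨le_rfl, hlo⟩⟩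
  rw [Finset.mem_Icc] at hmem
  obtain ⟨hm1, hm2⟩ := hmem
  refine ⟨istar, by omega, by omega, by omega, by omega, ?_⟩
  intro i hi1 hiN
  by_cases hc1 : i < k - 1
  · have h1 := chainL (k-1-i) i hi1 (by omega)
    have hrw : i + (k-1-i) = k-1 := by omega
    rw [hrw] at h1
    have h2 := hmin (k-1) (Finset.mem_Icc.2 ⟨by omega, by omega⟩)
    linarith
  · by_cases hc2 : j + 1 < i
    · have h1 := chainR (i - (j+1)) (j+1) le_rfl (by omega)
      have hrw : j + 1 + (i - (j+1)) = i := by omega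
      rw [hrw] at h1
      have h2 := hmin (j+1) (Finset.mem_Icc.2 ⟨by omega, by omega⟩)
      linarith
    · have h2 := hmin i (Finset.mem_Icc.2 ⟨by omega, by omega⟩)
      simpa using h2
end
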